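/- Let p and q be odd integers with p, q ≥ 5. Then there is a surjective group homomorphism from the presented group on generators a,b,c with relators c^2, a^p, b^q, abc, and b^{(q+1)/2} c b^{(q-1)/2} a^{(p-1)/2} c a^{(p+1)/2}, onto Coxeter's group (2,p,q;2). -/

import Mathlib

/-- The relators of the group `G'_ev(p,q)` on generators `a = of 0`, `b = of 1`, `c = of 2`,
with relators `c², aᵖ, b^q, abc, b^{(q+1)/2} c b^{(q-1)/2} a^{(p-1)/2} c a^{(p+1)/2}`. -/
def GevRels (p q : ℤ) : Set (FreeGroup (Fin 3)) :=
  let a : FreeGroup (Fin 3) := FreeGroup.of 0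
  let b : FreeGroup (Fin 3) := FreeGroup.of 1
  let c : FreeGroup (Fin 3) := FreeGroup.of 2
  { c ^ 2, a ^ p, b ^ q, a * b * c,
    b ^ ((q + 1) / 2) * c * b ^ ((q - 1) / 2) * a ^ ((p - 1) / 2) * c * a ^ ((p + 1) / 2) }

/-- The relators of Coxeter's group `(2,p,q;2)` on generators `α = of 0`, `β = of 1`,
with relators `αᵖ, β^q, (αβ)², (α²β²)²`. -/
def coxeter2pq2Rels (p q : ℤ) : Set (FreeGroup (Fin 2)) :=
  let al : FreeGroup (Fin 2) := FreeGroup.of 0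
  let be : FreeGroup (Fin 2) := FreeGroup.of 1
  { al ^ p, be ^ q, (al * be) ^ 2, (al ^ 2 * be ^ 2) ^ 2 }

/-!
Send `a ↦ α²`, `b ↦ β²`, `c ↦ (α²β²)⁻¹`. Since `p` and `q` are odd, `(α²)^((p ± 1)/2) = α^{±1}` and
likewise for `β`, so the long relator becomes `β (α²β²)⁻¹ β⁻¹ α⁻¹ (α²β²)⁻¹ α`, which is the inverse of
`u · α⁻¹u²α · u` with `u = αβ` and hence trivial because `u² = 1`. The other relators are immediate.
The image contains `α = (α²)^((p+1)/2)` and `β = (β²)^((q+1)/2)`, so the map is onto.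
-/

section Group

variable {G : Type*} [Group G] {g : G} {n : ℤ}

theorem sq_zpow_eq_one_of_zpow_eq_one (hg : g ^ n = 1) : (g ^ 2) ^ n = 1 := by
  rw [← zpow_natCast, ← zpow_mul, mul_comm, zpow_mul, hg, one_zpow]

theorem sq_zpow_add_one_div_two (hn : Odd n) (hg : g ^ n = 1) : (g ^ 2) ^ ((n + 1) / 2) = g := by
  obtain ⟨k, rfl⟩ := hn
  rw [← zpow_natCast, ← zpow_mul, show ((2 : ℕ) : ℤ) * ((2 * k + 1 + 1) / 2) = 2 * k + 1 + 1 by omega,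
    zpow_add_one, hg, one_mul]

theorem sq_zpow_sub_one_div_two (hn : Odd n) (hg : g ^ n = 1) : (g ^ 2) ^ ((n - 1) / 2) = g⁻¹ := by
  obtain ⟨k, rfl⟩ := hn
  rw [← zpow_natCast, ← zpow_mul, show ((2 : ℕ) : ℤ) * ((2 * k + 1 - 1) / 2) = 2 * k + 1 - 1 by omega,
    zpow_sub_one, hg, one_mul]

theorem long_relator_image_eq_one {α β : G} (h : (α * β) ^ 2 = 1) :
    β * (α ^ 2 * β ^ 2)⁻¹ * β⁻¹ * α⁻¹ * (α ^ 2 * β ^ 2)⁻¹ * α = 1 := by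
  calc β * (α ^ 2 * β ^ 2)⁻¹ * β⁻¹ * α⁻¹ * (α ^ 2 * β ^ 2)⁻¹ * α
      = ((α * β) * (α⁻¹ * ((α * β) * (α * β)) * α) * (α * β))⁻¹ := by group
    _ = 1 := by rw [← sq, h, mul_one, inv_mul_cancel, mul_one, ← sq, h, inv_one]

def gevToCoxeterGens (α β : G) : Fin 3 → G := ![α ^ 2, β ^ 2, (α ^ 2 * β ^ 2)⁻¹]

theorem lift_gevToCoxeterGens_eq_one {p q : ℤ} (hp : Odd p) (hq : Odd q) {α β : G}
    (hα : α ^ p = 1) (hβ : β ^ q = 1) (hαβ : (α * β) ^ 2 = 1) (hαβ2 : (α ^ 2 * β ^ 2) ^ 2 = 1) :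
    ∀ r ∈ GevRels p q, FreeGroup.lift (gevToCoxeterGens α β) r = 1 := by
  simp only [GevRels, Set.mem_insert_iff, Set.mem_singleton_iff]
  rintro r (rfl | rfl | rfl | rfl | rfl) <;>
    simp only [map_mul, map_pow, map_zpow, FreeGroup.lift_apply_of, gevToCoxeterGens,
      Matrix.cons_val_zero, Matrix.cons_val_one, Matrix.cons_val_two, Matrix.head_cons,
      Matrix.tail_cons]
  · rw [inv_pow, hαβ2, inv_one]
  · exact sq_zpow_eq_one_of_zpow_eq_one hα
  · exact sq_zpow_eq_one_of_zpow_eq_one hβ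
  · group
  · rw [sq_zpow_add_one_div_two hq hβ, sq_zpow_sub_one_div_two hq hβ,
      sq_zpow_sub_one_div_two hp hα, sq_zpow_add_one_div_two hp hα]
    exact long_relator_image_eq_one hαβ

end Group

section Coxeter2pq2

variable (p q : ℤ)

theorem coxeter2pq2_of_zero_zpow :
    (PresentedGroup.of 0 : PresentedGroup (coxeter2pq2Rels p q)) ^ p = 1 :=
  PresentedGroup.one_of_mem (by simp [coxeter2pq2Rels])

theorem coxeter2pq2_of_one_zpow :
    (PresentedGroup.of 1 : PresentedGroup (coxeter2pq2Rels p q)) ^ q = 1 :=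
  PresentedGroup.one_of_mem (by simp [coxeter2pq2Rels])

theorem coxeter2pq2_of_mul_of_sq :
    ((PresentedGroup.of 0 : PresentedGroup (coxeter2pq2Rels p q)) * PresentedGroup.of 1) ^ 2 = 1 :=
  PresentedGroup.one_of_mem
    (by simp [coxeter2pq2Rels] : (FreeGroup.of 0 * FreeGroup.of 1) ^ 2 ∈ coxeter2pq2Rels p q)

theorem coxeter2pq2_of_sq_mul_of_sq_sq :
    ((PresentedGroup.of 0 : PresentedGroup (coxeter2pq2Rels p q)) ^ 2 * PresentedGroup.of 1 ^ 2) ^ 2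
      = 1 :=
  PresentedGroup.one_of_mem (by simp [coxeter2pq2Rels] :
    (FreeGroup.of 0 ^ 2 * FreeGroup.of 1 ^ 2) ^ 2 ∈ coxeter2pq2Rels p q)

variable {p q} (hp : Odd p) (hq : Odd q)

def gevToCoxeter : PresentedGroup (GevRels p q) →* PresentedGroup (coxeter2pq2Rels p q) :=
  PresentedGroup.toGroup <| lift_gevToCoxeterGens_eq_one hp hq (coxeter2pq2_of_zero_zpow p q)
    (coxeter2pq2_of_one_zpow p q) (coxeter2pq2_of_mul_of_sq p q) (coxeter2pq2_of_sq_mul_of_sq_sq p q)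

theorem gevToCoxeter_surjective : Function.Surjective (gevToCoxeter hp hq) := by
  rw [← MonoidHom.range_eq_top, eq_top_iff, ← PresentedGroup.closure_range_of, Subgroup.closure_le]
  rintro _ ⟨i, rfl⟩
  fin_cases i
  · refine ⟨PresentedGroup.of 0 ^ ((p + 1) / 2), ?_⟩
    rw [map_zpow, gevToCoxeter, PresentedGroup.toGroup.of]
    exact sq_zpow_add_one_div_two hp (coxeter2pq2_of_zero_zpow p q)
  · refine ⟨PresentedGroup.of 1 ^ ((q + 1) / 2), ?_⟩
    rw [map_zpow, gevToCoxeter, PresentedGroup.toGroup.of]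
    exact sq_zpow_add_one_div_two hq (coxeter2pq2_of_one_zpow p q)

end Coxeter2pq2

theorem Gev_surjects_onto_coxeter_general (p q : ℤ) (hp : Odd p) (hq : Odd q) :
    ∃ f : PresentedGroup (GevRels p q) →* PresentedGroup (coxeter2pq2Rels p q),
      Function.Surjective f :=
  ⟨gevToCoxeter hp hq, gevToCoxeter_surjective hp hq⟩

/-- For `p,q` odd with `p,q ≥ 5`, the group
`⟨a,b,c ∣ c², aᵖ, b^q, abc, b^{(q+1)/2} c b^{(q-1)/2} a^{(p-1)/2} c a^{(p+1)/2}⟩`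
surjects onto Coxeter's group `(2,p,q;2)`. -/
theorem Gev_surjects_onto_coxeter (p q : ℤ) (hp : Odd p) (hq : Odd q)
    (hp5 : 5 ≤ p) (hq5 : 5 ≤ q) :
    ∃ f : PresentedGroup (GevRels p q) →* PresentedGroup (coxeter2pq2Rels p q),
      Function.Surjective f :=
  Gev_surjects_onto_coxeter_general p q hp hq
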